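/- arXiv:2011.10939 — 3 statements merged into one kernel-verified Lean document; each statement's English description precedes it below -/
import Mathlib

section
/- For a cycle C_n of length n, the quantity f_{C_n} (the alternating sum of (-1)^{|A|} over independent sets A) satisfies |f_{C_n}| = 2 if 3 divides n, and |f_{C_n}| = 1 otherwise. -/
/-!
Splitting the independent sets of `G[s]` according to whether they contain a vertex `v`, and
removing `v` from those that do, gives `I(G[s]; -1) = I(G[s - v]; -1) - I(G[s - N[v]]; -1)`,
where `I(·; -1)` is the alternating sum over independent sets.  Applied at a vertex of `C_n`
this gives `f(C_n) = p(n - 1) - p(n - 3)` with `p(m) = f(P_m)`, and applied at an end of a path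
it gives `p(m + 2) = p(m + 1) - p(m)`, so `p(m + 3) = -p(m)`.  Hence `|f(C_n)|` depends only on
`n mod 3`, and `p = 1, 0, -1, -1, 0` gives the values `2, 1, 1` at `n = 3, 4, 5`.
-/

open Finset

/-- `fG G = Σ (-1)^{|A|}` over all independent sets `A` of `G` (including `∅`). -/
def fG {V : Type*} [Fintype V] [DecidableEq V] (G : SimpleGraph V) [DecidableRel G.Adj] : ℤ :=
  ∑ A ∈ univ.powerset.filter (fun A => ∀ u ∈ A, ∀ w ∈ A, ¬ G.Adj u w), (-1 : ℤ) ^ A.card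

open SimpleGraph

namespace SimpleGraph

variable {V W : Type*} (G : SimpleGraph V) [DecidableRel G.Adj]

def altIndepSum (s : Finset V) : ℤ :=
  ∑ A ∈ s.powerset.filter (fun A => ∀ u ∈ A, ∀ w ∈ A, ¬ G.Adj u w), (-1 : ℤ) ^ A.card

@[simp] theorem altIndepSum_empty : G.altIndepSum ∅ = 1 := by
  simp [altIndepSum, filter_singleton]

theorem altIndepSum_insert [DecidableEq V] {t : Finset V} {v : V} (hv : v ∉ t) :
    G.altIndepSum (insert v t) = G.altIndepSum t - G.altIndepSum (t.filter (¬ G.Adj v ·)) := by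
  have hfilter :
      t.powerset.filter (fun A : Finset V => ∀ x ∈ insert v A, ∀ y ∈ insert v A, ¬ G.Adj x y) =
        (t.filter (¬ G.Adj v ·)).powerset.filter (fun A => ∀ x ∈ A, ∀ y ∈ A, ¬ G.Adj x y) := by
    ext A
    simp only [mem_filter, mem_powerset, subset_iff, forall_mem_insert, G.adj_comm _ v, G.irrefl,
      not_false_eq_true, true_and]
    grind
  rw [altIndepSum, sum_filter, sum_powerset_insert hv, ← sum_filter, ← sum_filter, hfilter,
    sub_eq_add_neg, altIndepSum, altIndepSum, ← sum_neg_distrib]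
  congr 1
  refine sum_congr rfl fun A hA => ?_
  have hvA : v ∉ A := fun h => hv (filter_subset _ _ (mem_powerset.1 (mem_filter.1 hA).1 h))
  rw [card_insert_of_notMem hvA, pow_succ, mul_neg_one]

theorem altIndepSum_image [DecidableEq W] (H : SimpleGraph W) [DecidableRel H.Adj] {f : V → W}
    {s : Finset V} (hf : Set.InjOn f s) (hadj : ∀ u ∈ s, ∀ w ∈ s, H.Adj (f u) (f w) ↔ G.Adj u w) :
    H.altIndepSum (s.image f) = G.altIndepSum s := by
  rw [altIndepSum, powerset_image, filter_image,
    sum_image ((image_injOn_powerset_of_injOn hf).mono (filter_subset _ _)), altIndepSum]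
  refine sum_congr (filter_congr fun A hA => ?_) fun A hA => ?_
  · have hAs := mem_powerset.1 hA
    simp only [forall_mem_image]
    exact forall₂_congr fun u hu => forall₂_congr fun w hw => not_congr (hadj u (hAs hu) w (hAs hw))
  · have hAs := mem_powerset.1 (mem_filter.1 hA).1
    rw [card_image_of_injOn (hf.mono (coe_subset.2 hAs))]

instance : DecidableRel (hasse ℕ).Adj := fun i j =>
  decidable_of_iff (i + 1 = j ∨ j + 1 = i) (by simp [hasse_adj])

theorem cycleGraph_adj_iff_val {n : ℕ} {u v : Fin (n + 2)} :
    (cycleGraph (n + 2)).Adj u v ↔ u.val + 1 = v.val ∨ v.val + 1 = u.val ∨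
      (u.val = 0 ∧ v.val = n + 1) ∨ (v.val = 0 ∧ u.val = n + 1) := by
  have hu := u.isLt
  have hv := v.isLt
  rw [cycleGraph_adj']
  rcases lt_trichotomy u v with h | rfl | h
  · rw [Fin.coe_sub_iff_lt.2 h, Fin.coe_sub_iff_le.2 h.le]
    have := Fin.lt_def.1 h
    omega
  · simp only [sub_self, Fin.val_zero]
    omega
  · rw [Fin.coe_sub_iff_le.2 h.le, Fin.coe_sub_iff_lt.2 h]
    have := Fin.lt_def.1 h
    omega

end SimpleGraph

theorem fG_eq_altIndepSum_univ {V : Type*} [Fintype V] [DecidableEq V] (G : SimpleGraph V)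
    [DecidableRel G.Adj] : fG G = G.altIndepSum univ := by
  rw [fG, altIndepSum]
  -- not `rfl`: `fG` decides its filter predicate through `Fintype.decidableForallFintype`
  congr!

/-- `hasse ℕ` is the infinite path, so this is `fG` of the path on `m` vertices. -/
def pathAltIndepSum (m : ℕ) : ℤ := (hasse ℕ).altIndepSum (range m)

theorem pathAltIndepSum_zero : pathAltIndepSum 0 = 1 := by
  simp [pathAltIndepSum]

theorem pathAltIndepSum_one : pathAltIndepSum 1 = 0 := by
  rw [pathAltIndepSum, range_add_one, altIndepSum_insert _ notMem_range_self]
  simp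

theorem pathAltIndepSum_add_two (m : ℕ) :
    pathAltIndepSum (m + 2) = pathAltIndepSum (m + 1) - pathAltIndepSum m := by
  have hnbr : (range (m + 1)).filter (¬ (hasse ℕ).Adj (m + 1) ·) = range m := by
    ext i
    simp only [mem_filter, mem_range, hasse_adj, Nat.covBy_iff_add_one_eq]
    omega
  rw [pathAltIndepSum, range_add_one, altIndepSum_insert _ notMem_range_self, hnbr]
  rfl

theorem pathAltIndepSum_add_three (m : ℕ) : pathAltIndepSum (m + 3) = -pathAltIndepSum m := by
  rw [pathAltIndepSum_add_two, pathAltIndepSum_add_two]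
  ring

theorem abs_pathAltIndepSum_add_two_sub :
    ∀ k, |pathAltIndepSum (k + 2) - pathAltIndepSum k| = if 3 ∣ k then 2 else 1
  | 0 => by
    rw [pathAltIndepSum_add_two, pathAltIndepSum_zero, pathAltIndepSum_one]
    rfl
  | 1 => by
    rw [pathAltIndepSum_add_two, pathAltIndepSum_add_two, pathAltIndepSum_zero,
      pathAltIndepSum_one]
    rfl
  | 2 => by
    rw [pathAltIndepSum_add_three, pathAltIndepSum_add_two, pathAltIndepSum_zero,
      pathAltIndepSum_one]
    rfl
  | k + 3 => by
    rw [pathAltIndepSum_add_three, pathAltIndepSum_add_three, neg_sub_neg, abs_sub_comm,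
      abs_pathAltIndepSum_add_two_sub k]
    simp [Nat.dvd_add_self_right]

def cycleArc (n a m : ℕ) : Finset (Fin n) := {v | a ≤ v.val ∧ v.val < a + m}

theorem altIndepSum_cycleGraph_cycleArc {n a m : ℕ} (ha : 1 ≤ a) (hm : a + m ≤ n + 2) :
    (cycleGraph (n + 2)).altIndepSum (cycleArc (n + 2) a m) = pathAltIndepSum m := by
  have himage : (cycleArc (n + 2) a m).image (·.val - a) = range m := by
    ext i
    simp only [cycleArc, mem_image, mem_filter, mem_univ, true_and, mem_range]
    constructor
    · rintro ⟨v, hv, rfl⟩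
      omega
    · intro hi
      exact ⟨⟨a + i, by omega⟩, by simp only; omega, by simp⟩
  rw [pathAltIndepSum, ← himage, altIndepSum_image (cycleGraph (n + 2)) (hasse ℕ)]
  · intro u hu w hw huw
    simp only [cycleArc, coe_filter, mem_univ, true_and, Set.mem_ofPred_eq] at hu hw huw
    exact Fin.ext (by omega)
  · intro u hu w hw
    simp only [cycleArc, mem_filter, mem_univ, true_and] at hu hw
    rw [hasse_adj, cycleGraph_adj_iff_val, Nat.covBy_iff_add_one_eq, Nat.covBy_iff_add_one_eq]
    omega

theorem fG_cycleGraph (k : ℕ) :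
    fG (cycleGraph (k + 3)) = pathAltIndepSum (k + 2) - pathAltIndepSum k := by
  have huniv : univ = insert 0 (cycleArc (k + 3) 1 (k + 2)) := by
    ext v
    simp only [cycleArc, mem_univ, mem_insert, mem_filter, true_and, true_iff, Fin.ext_iff,
      Fin.val_zero]
    omega
  have hnbr : (cycleArc (k + 3) 1 (k + 2)).filter (¬ (cycleGraph (k + 3)).Adj 0 ·) =
      cycleArc (k + 3) 2 k := by
    ext v
    simp only [cycleArc, mem_filter, mem_univ, true_and, cycleGraph_adj_iff_val, Fin.val_zero]
    omega
  rw [fG_eq_altIndepSum_univ, huniv, altIndepSum_insert _ (by simp [cycleArc]), hnbr,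
    altIndepSum_cycleGraph_cycleArc le_rfl (by omega),
    altIndepSum_cycleGraph_cycleArc (by omega) (by omega)]

/-- For the cycle `C_n` (`n ≥ 3`), `|f_{C_n}| = 2` if `3 ∣ n` and `|f_{C_n}| = 1` otherwise. -/
theorem abs_fG_cycleGraph (n : ℕ) (hn : 3 ≤ n) :
    |fG (SimpleGraph.cycleGraph n)| = if 3 ∣ n then 2 else 1 := by
  obtain ⟨k, rfl⟩ := Nat.exists_eq_add_of_le' hn
  rw [fG_cycleGraph, abs_pathAltIndepSum_add_two_sub]
  simp [Nat.dvd_add_self_right]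
end

section
/- Let G be a finite graph whose vertex set is partitioned into three nonempty sets C_0, C_1, C_2, each of which is an independent set in G, such that every edge of G joins C_i to C_{i+1 mod 3} for some i, and every vertex of C_i has a neighbor in C_{i+1 mod 3}. Then G contains an induced cycle whose length is divisible by 3. -/
/-!
Orient every edge from `C i` to `C (i + 1)`. Every vertex then has an out-neighbour, so the
finite digraph has a directed cycle; take a shortest one. A chord of it, oriented from `g a` to
`g b`, would close the directed path `g b → ⋯ → g a` into a strictly shorter directed cycle, so
the shortest directed cycle is an induced cycle of `G`. Along it the layer index increases by
one at each step, hence its length is divisible by 3.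
-/

open Function

namespace Function

theorem exists_mem_periodicPts {α : Type*} [Finite α] [Nonempty α] (f : α → α) :
    ∃ x, x ∈ periodicPts f := by
  obtain ⟨x⟩ := ‹Nonempty α›
  obtain ⟨m, n, heq, hne⟩ : ∃ m n, f^[m] x = f^[n] x ∧ m ≠ n := by
    simpa [Injective] using not_injective_infinite_finite (f^[·] x)
  wlog hlt : m < n generalizing m n
  · exact this n m heq.symm hne.symm (by omega)
  refine ⟨f^[m] x, mk_mem_periodicPts (n := n - m) (by omega) ?_⟩
  show f^[n - m] (f^[m] x) = f^[m] x
  rw [← iterate_add_apply, Nat.sub_add_cancel hlt.le, heq]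

end Function

section DirectedCycle

variable {V : Type*}

def IsDirectedCycle (R : V → V → Prop) {n : ℕ} (g : ZMod n → V) : Prop :=
  Injective g ∧ ∀ k, R (g k) (g (k + 1))

variable {R : V → V → Prop}

theorem isDirectedCycle_of_path {m : ℕ} {p : ℕ → V} (hinj : Set.InjOn p (Set.Iic m))
    (hstep : ∀ k < m, R (p k) (p (k + 1))) (hclose : R (p m) (p 0)) :
    IsDirectedCycle R (fun k : ZMod (m + 1) => p k.val) := by
  have val_le (k : ZMod (m + 1)) : k.val ≤ m := Nat.lt_succ_iff.mp (ZMod.val_lt k)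
  refine ⟨fun i j hij => ZMod.val_injective _ (hinj (val_le i) (val_le j) hij), fun k => ?_⟩
  show R (p k.val) (p (k + 1).val)
  have hval : (k + 1).val = (k.val + 1) % (m + 1) := by
    rw [ZMod.val_add, ZMod.val_one_eq_one_mod, Nat.add_mod_mod]
  rcases (val_le k).lt_or_eq with hlt | heq
  · rw [hval, Nat.mod_eq_of_lt (by omega)]
    exact hstep _ hlt
  · rw [hval, heq, Nat.mod_self]
    exact hclose

theorem exists_isDirectedCycle [Finite V] [Nonempty V] (hR : ∀ v, ∃ w, R v w) :
    ∃ n, ∃ g : ZMod (n + 1) → V, IsDirectedCycle R g := by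
  choose f hf using hR
  obtain ⟨x, hx⟩ := exists_mem_periodicPts f
  obtain ⟨n, hn⟩ := Nat.exists_eq_add_one_of_ne_zero (minimalPeriod_pos_of_mem_periodicPts hx).ne'
  have hinj : Set.InjOn (f^[·] x) (Set.Iic n) := by
    simpa [hn, Set.Iio_add_one_eq_Iic] using iterate_injOn_Iio_minimalPeriod (f := f) (x := x)
  have hreturn : f (f^[n] x) = x := by
    simpa only [hn, iterate_succ_apply'] using iterate_minimalPeriod (f := f) (x := x)
  refine ⟨n, _, isDirectedCycle_of_path hinj (fun k _ => ?_) ?_⟩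
  · simpa only [iterate_succ_apply'] using hf (f^[k] x)
  · simpa [hreturn] using hf (f^[n] x)

theorem IsDirectedCycle.eq_add_one_of_rel {n : ℕ} {g : ZMod (n + 1) → V}
    (hg : IsDirectedCycle R g)
    (hmin : ∀ m (g' : ZMod (m + 1) → V), IsDirectedCycle R g' → n ≤ m) {a b : ZMod (n + 1)}
    (hab : R (g a) (g b)) : b = a + 1 := by
  set d := (a - b).val
  have hd : d ≤ n := Nat.lt_succ_iff.mp (ZMod.val_lt _)
  have hinj : Set.InjOn (fun k : ℕ => g (b + k)) (Set.Iic d) := by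
    intro i hi j hj hij
    have hcast : (i : ZMod (n + 1)) = j := add_left_cancel (hg.1 hij)
    rwa [ZMod.natCast_eq_natCast_iff', Nat.mod_eq_of_lt (by grind), Nat.mod_eq_of_lt (by grind)]
      at hcast
  have hshort := isDirectedCycle_of_path hinj (fun k _ => by simpa [← add_assoc] using hg.2 _)
    (by simpa [d] using hab)
  have hdn : ((a - b).val : ZMod (n + 1)) = n := congrArg Nat.cast (hd.antisymm (hmin d _ hshort))
  have hn : (n : ZMod (n + 1)) = -1 :=
    eq_neg_of_add_eq_zero_left (by exact_mod_cast ZMod.natCast_self (n + 1))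
  rw [ZMod.natCast_zmod_val, hn] at hdn
  linear_combination -hdn

theorem exists_chordless_isDirectedCycle [Finite V] [Nonempty V] (hR : ∀ v, ∃ w, R v w) :
    ∃ n, ∃ g : ZMod (n + 1) → V, IsDirectedCycle R g ∧ ∀ a b, R (g a) (g b) → b = a + 1 := by
  classical
  have hex := exists_isDirectedCycle hR
  obtain ⟨g, hg⟩ := Nat.find_spec hex
  exact ⟨_, g, hg, fun a b => hg.eq_add_one_of_rel fun m g' hg' => Nat.find_min' hex ⟨g', hg'⟩⟩

theorem IsDirectedCycle.dvd_length {n q : ℕ} {g : ZMod n → V} (hg : IsDirectedCycle R g)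
    (ℓ : V → ZMod q) (hℓ : ∀ u w, R u w → ℓ w = ℓ u + 1) : q ∣ n := by
  have hlayer : ∀ t : ℕ, ℓ (g t) = ℓ (g 0) + t := by
    intro t
    induction t with
    | zero => simp
    | succ t ih => rw [Nat.cast_succ, hℓ _ _ (hg.2 _), ih]; push_cast; ring
  have hn := hlayer n
  rw [ZMod.natCast_self] at hn
  exact (ZMod.natCast_eq_zero_iff n q).mp (left_eq_add.mp hn)

theorem IsDirectedCycle.adj_iff_of_chordless {G : SimpleGraph V} {n : ℕ} {g : ZMod n → V}
    (hg : IsDirectedCycle R g) (hRG : ∀ u w, R u w → G.Adj u w)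
    (hGR : ∀ u w, G.Adj u w → R u w ∨ R w u) (hchord : ∀ a b, R (g a) (g b) → b = a + 1)
    (i j : ZMod n) : G.Adj (g i) (g j) ↔ j = i + 1 ∨ i = j + 1 := by
  refine ⟨fun hij => (hGR _ _ hij).imp (hchord i j) (hchord j i), ?_⟩
  rintro (rfl | rfl)
  · exact hRG _ _ (hg.2 i)
  · exact (hRG _ _ (hg.2 j)).symm

end DirectedCycle

theorem induced_cycle_of_three_layer_partition_general {V : Type*} [Fintype V]
    (G : SimpleGraph V) (C : ZMod 3 → Finset V)
    (hne : ∀ i, (C i).Nonempty)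
    (hdisj : ∀ i j, i ≠ j → Disjoint (C i) (C j))
    (hcover : ∀ v : V, ∃ i, v ∈ C i)
    (hedges : ∀ u w : V, G.Adj u w →
      ∃ i, (u ∈ C i ∧ w ∈ C (i + 1)) ∨ (w ∈ C i ∧ u ∈ C (i + 1)))
    (hout : ∀ i, ∀ u ∈ C i, ∃ w ∈ C (i + 1), G.Adj u w) :
    ∃ n : ℕ, 3 ∣ n ∧ 3 ≤ n ∧ ∃ f : ZMod n → V, Function.Injective f ∧
      ∀ i j : ZMod n, G.Adj (f i) (f j) ↔ (j = i + 1 ∨ i = j + 1) := by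
  choose ℓ hℓ using hcover
  have hℓ_eq : ∀ v i, v ∈ C i → ℓ v = i := fun v i hv =>
    by_contra fun h => Finset.disjoint_left.mp (hdisj _ _ h) (hℓ v) hv
  let R : V → V → Prop := fun u w => G.Adj u w ∧ ℓ w = ℓ u + 1
  have hsucc : ∀ v, ∃ w, R v w := fun v =>
    let ⟨w, hw, hvw⟩ := hout (ℓ v) v (hℓ v)
    ⟨w, hvw, hℓ_eq w _ hw⟩
  have horient : ∀ u w, G.Adj u w → R u w ∨ R w u := by
    intro u w huw
    obtain ⟨i, ⟨hu, hw⟩ | ⟨hw, hu⟩⟩ := hedges u w huw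
    · exact .inl ⟨huw, by rw [hℓ_eq w _ hw, hℓ_eq u _ hu]⟩
    · exact .inr ⟨huw.symm, by rw [hℓ_eq u _ hu, hℓ_eq w _ hw]⟩
  have : Nonempty V := ⟨(hne 0).choose⟩
  obtain ⟨n, g, hg, hchord⟩ := exists_chordless_isDirectedCycle hsucc
  have h3 : 3 ∣ n + 1 := hg.dvd_length ℓ fun _ _ h => h.2
  exact ⟨n + 1, h3, Nat.le_of_dvd n.succ_pos h3, g, hg.1,
    hg.adj_iff_of_chordless (fun _ _ h => h.1) horient hchord⟩

/-- If `V(G)` is partitioned into three nonempty independent sets `C 0, C 1, C 2` such that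
every edge joins some `C i` to `C (i+1)` and every vertex of `C i` has a neighbor in
`C (i+1)` (indices mod 3), then `G` contains an induced cycle of length divisible by 3. -/
theorem induced_cycle_of_three_layer_partition {V : Type*} [Fintype V] [DecidableEq V]
    (G : SimpleGraph V) (C : ZMod 3 → Finset V)
    (hne : ∀ i, (C i).Nonempty)
    (hdisj : ∀ i j, i ≠ j → Disjoint (C i) (C j))
    (hcover : ∀ v : V, ∃ i, v ∈ C i)
    (hindep : ∀ i, ∀ u ∈ C i, ∀ w ∈ C i, ¬ G.Adj u w)
    (hedges : ∀ u w : V, G.Adj u w →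
      ∃ i, (u ∈ C i ∧ w ∈ C (i + 1)) ∨ (w ∈ C i ∧ u ∈ C (i + 1)))
    (hout : ∀ i, ∀ u ∈ C i, ∃ w ∈ C (i + 1), G.Adj u w) :
    ∃ n : ℕ, 3 ∣ n ∧ 3 ≤ n ∧ ∃ f : ZMod n → V, Function.Injective f ∧
      ∀ i j : ZMod n, G.Adj (f i) (f j) ↔ (j = i + 1 ∨ i = j + 1) :=
  induced_cycle_of_three_layer_partition_general G C hne hdisj hcover hedges hout
end

section
/- If a graph G contains an induced cycle of length divisible by 3, then |f_G| need not be at most 1; specifically, f_{C_{3k}} ∈ {2, -2} for every k ≥ 1. -/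
open Finset

/-- no two consecutive naturals -/
def nValid (A : Finset ℕ) : Prop := ∀ i ∈ A, i + 1 ∉ A

instance : DecidablePred nValid := fun A => by unfold nValid; infer_instance

lemma nValid.subset {A B : Finset ℕ} (h : A ⊆ B) (hB : nValid B) : nValid A :=
  fun i hi hi1 => hB i (h hi) (h hi1)

/-- signed sum over valid subsets of `s` -/
def nS (s : Finset ℕ) : ℤ := ∑ A ∈ s.powerset.filter nValid, (-1 : ℤ) ^ A.card

def nP (n : ℕ) : ℤ := nS (Finset.range n)

lemma nValid_image_succ (A : Finset ℕ) : nValid (A.image (· + 1)) ↔ nValid A := by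
  constructor
  · intro h i hi hi1
    exact h (i + 1) (mem_image_of_mem _ hi) (mem_image_of_mem _ hi1)
  · intro h i hi hi1
    obtain ⟨a, ha, rfl⟩ := mem_image.1 hi
    obtain ⟨b, hb, hab⟩ := mem_image.1 hi1
    have : b = a + 1 := by omega
    exact h a ha (this ▸ hb)

lemma nS_image_succ (s : Finset ℕ) : nS (s.image (· + 1)) = nS s := by
  unfold nS
  refine (Finset.sum_bij' (fun A (_ : A ∈ s.powerset.filter nValid) => A.image (· + 1))
    (fun B _ => B.image (fun x => x - 1)) ?_ ?_ ?_ ?_ ?_).symm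
  · intro A hA
    simp only [mem_filter, mem_powerset] at hA ⊢
    exact ⟨image_subset_image hA.1, (nValid_image_succ A).2 hA.2⟩
  · intro B hB
    simp only [mem_filter, mem_powerset] at hB
    obtain ⟨hsub, hval⟩ := hB
    have h1 : ∀ x ∈ B, 1 ≤ x := by
      intro x hx; obtain ⟨c, _, rfl⟩ := mem_image.1 (hsub hx); omega
    simp only [mem_filter, mem_powerset]
    constructor
    · intro x hx
      obtain ⟨a, ha, rfl⟩ := mem_image.1 hx
      obtain ⟨b, hb, hba⟩ := mem_image.1 (hsub ha)
      have : a - 1 = b := by omega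
      exact this ▸ hb
    · intro i hi hi1
      obtain ⟨a, ha, rfl⟩ := mem_image.1 hi
      obtain ⟨b, hb, hba⟩ := mem_image.1 hi1
      have := h1 a ha; have := h1 b hb
      have : b = a + 1 := by omega
      exact hval a ha (this ▸ hb)
  · intro A hA
    simp only [mem_filter, mem_powerset] at hA
    ext x
    simp only [mem_image]
    constructor
    · rintro ⟨y, ⟨z, hz, rfl⟩, rfl⟩
      simpa using hz
    · intro hx
      exact ⟨x + 1, ⟨x, hx, rfl⟩, rfl⟩
  · intro B hB
    simp only [mem_filter, mem_powerset] at hB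
    have h1 : ∀ x ∈ B, 1 ≤ x := by
      intro x hx; obtain ⟨c, _, rfl⟩ := mem_image.1 (hB.1 hx); omega
    ext x
    simp only [mem_image]
    constructor
    · rintro ⟨y, ⟨z, hz, rfl⟩, rfl⟩
      have hz1 := h1 z hz
      have : z - 1 + 1 = z := by omega
      rwa [this]
    · intro hx
      exact ⟨x - 1, ⟨x, hx, rfl⟩, by have := h1 x hx; omega⟩
  · intro A hA
    rw [Finset.card_image_of_injective _ (add_left_injective 1)]

lemma nS_Ico (a n : ℕ) : nS (Finset.Ico a (a + n)) = nP n := by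
  induction a with
  | zero => simp [nP]
  | succ a ih =>
    have h : Finset.Ico (a + 1) (a + 1 + n) = (Finset.Ico a (a + n)).image (· + 1) := by
      rw [Finset.image_add_right_Ico]
      congr 1
      omega
    rw [h, nS_image_succ, ih]

lemma filter_not_mem_top (n : ℕ) :
    ((Finset.range (n + 1)).powerset.filter nValid).filter (fun A => n ∉ A)
      = (Finset.range n).powerset.filter nValid := by
  ext A
  simp only [mem_filter, mem_powerset]
  constructor
  · rintro ⟨⟨hsub, hval⟩, hn⟩
    refine ⟨fun x hx => ?_, hval⟩
    have h1 := hsub hx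
    simp only [mem_range] at h1 ⊢
    rcases Nat.lt_succ_iff_lt_or_eq.1 h1 with h | rfl
    · exact h
    · exact absurd hx hn
  · rintro ⟨hsub, hval⟩
    refine ⟨⟨hsub.trans (by simp), hval⟩, fun hn => ?_⟩
    have := hsub hn; simp at this

/-- key bijection: valid sets containing the top element `m` of `range (m+1)`,
with the rest living in `s` (where `m ∉ s`, `m-1 ∉ s`). -/
lemma sum_contains_top (m : ℕ) (s : Finset ℕ) (t : Finset (Finset ℕ))
    (hts : ∀ A, A ∈ t ↔ A ⊆ s ∧ nValid A)
    (hm : m ∉ s) (hm1 : 1 ≤ m → m - 1 ∉ s) (hmsub : s ⊆ Finset.range m)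
    (u : Finset (Finset ℕ))
    (hu : ∀ A, A ∈ u ↔ (A ⊆ insert m s ∧ nValid A) ∧ m ∈ A) :
    ∑ A ∈ u, (-1 : ℤ) ^ A.card = ∑ B ∈ t, -(-1 : ℤ) ^ B.card := by
  refine Finset.sum_bij' (fun A (_ : A ∈ u) => A.erase m) (fun B _ => insert m B)
    ?_ ?_ ?_ ?_ ?_
  · intro A hA
    rw [hu] at hA
    obtain ⟨⟨hsub, hval⟩, hmem⟩ := hA
    rw [hts]
    refine ⟨fun x hx => ?_, hval.subset (erase_subset _ _)⟩
    obtain ⟨hne, hxA⟩ := mem_erase.1 hx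
    rcases mem_insert.1 (hsub hxA) with h | h
    · exact absurd h hne
    · exact h
  · intro B hB
    rw [hts] at hB
    obtain ⟨hsub, hval⟩ := hB
    rw [hu]
    have hmB : m ∉ B := fun h => hm (hsub h)
    refine ⟨⟨insert_subset_insert _ hsub, ?_⟩, mem_insert_self _ _⟩
    intro i hi hi1
    rcases mem_insert.1 hi with rfl | hiB
    · rcases mem_insert.1 hi1 with h | h
      · omega
      · have := hmsub (hsub h); simp only [mem_range] at this; omega
    · rcases mem_insert.1 hi1 with h | h
      · -- i + 1 = m, so i = m - 1 ∈ s, contradiction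
        have him := hmsub (hsub hiB)
        simp only [mem_range] at him
        have h1 : 1 ≤ m := by omega
        have : i = m - 1 := by omega
        exact hm1 h1 (this ▸ hsub hiB)
      · exact hval i hiB h
  · intro A hA
    rw [hu] at hA
    exact insert_erase hA.2
  · intro B hB
    rw [hts] at hB
    exact erase_insert (fun h => hm (hB.1 h))
  · intro A hA
    rw [hu] at hA
    have h1 : 1 ≤ A.card := card_pos.2 ⟨m, hA.2⟩
    obtain ⟨c, hc⟩ : ∃ c, A.card = c + 1 := ⟨A.card - 1, by omega⟩
    rw [card_erase_of_mem hA.2, hc]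
    simp [pow_succ]

lemma nP_rec (n : ℕ) : nP (n + 2) = nP (n + 1) - nP n := by
  unfold nP nS
  rw [← Finset.sum_filter_add_sum_filter_not
    ((Finset.range (n + 2)).powerset.filter nValid) (fun A => (n + 1) ∉ A)]
  rw [filter_not_mem_top (n + 1)]
  have h2 : ∑ A ∈ ((Finset.range (n + 2)).powerset.filter nValid).filter
      (fun A => ¬ (n + 1) ∉ A), (-1 : ℤ) ^ A.card
      = ∑ B ∈ (Finset.range n).powerset.filter nValid, -(-1 : ℤ) ^ B.card := by
    refine sum_contains_top (n + 1) (Finset.range n) _ (fun A => by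
      simp [mem_filter, mem_powerset]) (by simp) (fun _ => by simp) ?_ _ (fun A => ?_)
    · intro x hx; simp only [mem_range] at hx ⊢; omega
    · simp only [mem_filter, mem_powerset, not_not]
      constructor
      · rintro ⟨⟨hsub, hval⟩, hmem⟩
        refine ⟨⟨fun x hx => ?_, hval⟩, hmem⟩
        have hx2 := mem_range.1 (hsub hx)
        rcases eq_or_ne x (n + 1) with rfl | hne
        · exact mem_insert_self _ _
        · have hxn : x ≠ n := by
            rintro rfl
            exact hval x hx hmem
          exact mem_insert_of_mem (mem_range.2 (by omega))
      · rintro ⟨⟨hsub, hval⟩, hmem⟩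
        refine ⟨⟨fun x hx => ?_, hval⟩, hmem⟩
        rcases mem_insert.1 (hsub hx) with rfl | h
        · simp
        · simp only [mem_range] at h ⊢; omega
  rw [h2, Finset.sum_neg_distrib]
  ring

lemma nP_zero : nP 0 = 1 := by decide
lemma nP_one : nP 1 = 0 := by decide
lemma nP_two : nP 2 = -1 := by decide

lemma nP_add_three (n : ℕ) : nP (n + 3) = -nP n := by
  have h1 := nP_rec (n + 1)
  have h2 := nP_rec n
  have : n + 1 + 2 = n + 3 := by omega
  rw [this] at h1
  have : n + 1 + 1 = n + 2 := by omega
  rw [this] at h1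
  omega

lemma nP_three_mul (k : ℕ) : nP (3 * k) = (-1 : ℤ) ^ k := by
  induction k with
  | zero => simpa using nP_zero
  | succ k ih =>
    have : 3 * (k + 1) = 3 * k + 3 := by ring
    rw [this, nP_add_three, ih, pow_succ]
    ring

lemma nP_three_mul_add_two (k : ℕ) : nP (3 * k + 2) = -(-1 : ℤ) ^ k := by
  induction k with
  | zero => simpa using nP_two
  | succ k ih =>
    have : 3 * (k + 1) + 2 = (3 * k + 2) + 3 := by ring
    rw [this, nP_add_three, ih, pow_succ]
    ring

/-! ### Cycle part -/

def cValid (n : ℕ) (A : Finset ℕ) : Prop := nValid A ∧ ¬(0 ∈ A ∧ n - 1 ∈ A)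

instance : ∀ n, DecidablePred (cValid n) := fun n A => by unfold cValid; infer_instance

def nC (n : ℕ) : ℤ := ∑ A ∈ (Finset.range n).powerset.filter (cValid n), (-1 : ℤ) ^ A.card

lemma nC_eq (m : ℕ) : nC (m + 3) = nP (m + 2) - nP m := by
  unfold nC
  rw [← Finset.sum_filter_add_sum_filter_not
    ((Finset.range (m + 3)).powerset.filter (cValid (m + 3))) (fun A => (m + 2) ∉ A)]
  have h1 : ((Finset.range (m + 3)).powerset.filter (cValid (m + 3))).filter
      (fun A => (m + 2) ∉ A) = (Finset.range (m + 2)).powerset.filter nValid := by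
    ext A
    simp only [mem_filter, mem_powerset, cValid]
    constructor
    · rintro ⟨⟨hsub, hval, _⟩, hmem⟩
      refine ⟨fun x hx => ?_, hval⟩
      have := mem_range.1 (hsub hx)
      have hxne : x ≠ m + 2 := fun h => hmem (h ▸ hx)
      exact mem_range.2 (by omega)
    · rintro ⟨hsub, hval⟩
      have hmem : m + 2 ∉ A := fun h => by have := mem_range.1 (hsub h); omega
      refine ⟨⟨fun x hx => ?_, hval, fun h => hmem (by simpa using h.2)⟩, hmem⟩
      have := mem_range.1 (hsub hx)
      exact mem_range.2 (by omega)
  have h2 : ∑ A ∈ ((Finset.range (m + 3)).powerset.filter (cValid (m + 3))).filter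
      (fun A => ¬ (m + 2) ∉ A), (-1 : ℤ) ^ A.card
      = ∑ B ∈ (Finset.Ico 1 (m + 1)).powerset.filter nValid, -(-1 : ℤ) ^ B.card := by
    refine sum_contains_top (m + 2) (Finset.Ico 1 (m + 1)) _
      (fun A => by simp [mem_filter, mem_powerset]) (by simp) (fun _ => by simp) ?_ _
      (fun A => ?_)
    · intro x hx
      have := mem_Ico.1 hx
      exact mem_range.2 (by omega)
    · simp only [mem_filter, mem_powerset, cValid, not_not]
      constructor
      · rintro ⟨⟨hsub, hval, hwrap⟩, hmem⟩
        refine ⟨⟨fun x hx => ?_, hval⟩, hmem⟩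
        have hx3 := mem_range.1 (hsub hx)
        rcases eq_or_ne x (m + 2) with rfl | hne
        · exact mem_insert_self _ _
        · have hx0 : x ≠ 0 := fun h => hwrap ⟨h ▸ hx, by simpa using hmem⟩
          have hxm1 : x ≠ m + 1 := by
            rintro rfl
            exact hval (m + 1) hx (by simpa using hmem)
          exact mem_insert_of_mem (mem_Ico.2 (by omega))
      · rintro ⟨⟨hsub, hval⟩, hmem⟩
        have h0 : 0 ∉ A := by
          intro h
          rcases mem_insert.1 (hsub h) with h' | h'
          · omega
          · have := mem_Ico.1 h'; omega
        refine ⟨⟨fun x hx => ?_, hval, fun h => h0 h.1⟩, hmem⟩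
        rcases mem_insert.1 (hsub hx) with rfl | h'
        · exact mem_range.2 (by omega)
        · have := mem_Ico.1 h'; exact mem_range.2 (by omega)
  rw [h1, h2, Finset.sum_neg_distrib]
  have h3 : nS (Finset.Ico 1 (m + 1)) = nP m := by
    have := nS_Ico 1 m
    rwa [show 1 + m = m + 1 by omega] at this
  unfold nP nS at *
  rw [h3]
  ring

lemma cyc_adj {m : ℕ} {u v : Fin (m + 3)} :
    (SimpleGraph.cycleGraph (m + 3)).Adj u v ↔
      ((u : ℕ) + 1 = (v : ℕ) ∨ (v : ℕ) + 1 = (u : ℕ) ∨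
        ((u : ℕ) = 0 ∧ (v : ℕ) = m + 2) ∨ ((v : ℕ) = 0 ∧ (u : ℕ) = m + 2)) := by
  have key : ∀ a b : Fin (m + 3), (a - b = 1) ↔
      ((b : ℕ) + 1 = (a : ℕ) ∨ ((b : ℕ) = m + 2 ∧ (a : ℕ) = 0)) := by
    intro a b
    rw [sub_eq_iff_eq_add, Fin.ext_iff, Fin.val_add]
    have hone : ((1 : Fin (m + 3)) : ℕ) = 1 := rfl
    rw [hone]
    have hb := b.isLt
    have ha := a.isLt
    rcases Nat.lt_or_ge ((b : ℕ) + 1) (m + 3) with h | h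
    · rw [show 1 + (b : ℕ) = (b : ℕ) + 1 from by omega, Nat.mod_eq_of_lt h]
      omega
    · rw [show 1 + (b : ℕ) = m + 3 from by omega, Nat.mod_self]
      omega
  rw [SimpleGraph.cycleGraph_adj, key, key]
  tauto

lemma indep_iff {m : ℕ} (A : Finset (Fin (m + 3))) :
    (∀ u ∈ A, ∀ w ∈ A, ¬ (SimpleGraph.cycleGraph (m + 3)).Adj u w) ↔
      cValid (m + 3) (A.image Fin.val) := by
  have hlast : m + 3 - 1 = m + 2 := by omega
  constructor
  · intro h
    constructor
    · intro i hi hi1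
      obtain ⟨u, hu, rfl⟩ := mem_image.1 hi
      obtain ⟨w, hw, hwv⟩ := mem_image.1 hi1
      exact h u hu w hw (cyc_adj.2 (Or.inl (by omega)))
    · rintro ⟨h0, hn⟩
      rw [hlast] at hn
      obtain ⟨u, hu, huv⟩ := mem_image.1 h0
      obtain ⟨w, hw, hwv⟩ := mem_image.1 hn
      exact h u hu w hw (cyc_adj.2 (Or.inr (Or.inr (Or.inl ⟨huv, hwv⟩))))
  · rintro ⟨hval, hwrap⟩ u hu w hw hadj
    rw [hlast] at hwrap
    rcases cyc_adj.1 hadj with h | h | ⟨h1, h2⟩ | ⟨h1, h2⟩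
    · exact hval (u : ℕ) (mem_image_of_mem _ hu) (h ▸ mem_image_of_mem _ hw)
    · exact hval (w : ℕ) (mem_image_of_mem _ hw) (h ▸ mem_image_of_mem _ hu)
    · exact hwrap ⟨h1 ▸ mem_image_of_mem _ hu, h2 ▸ mem_image_of_mem _ hw⟩
    · exact hwrap ⟨h1 ▸ mem_image_of_mem _ hw, h2 ▸ mem_image_of_mem _ hu⟩

lemma image_val_attachFin {n : ℕ} (B : Finset ℕ) (h : ∀ x ∈ B, x < n) :
    (B.attachFin h).image Fin.val = B := by
  ext x
  simp only [mem_image]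
  constructor
  · rintro ⟨a, ha, rfl⟩
    exact (mem_attachFin h).1 ha
  · intro hx
    exact ⟨⟨x, h x hx⟩, (mem_attachFin h).2 hx, rfl⟩

lemma fG_cycle_eq (m : ℕ) : fG (SimpleGraph.cycleGraph (m + 3)) = nC (m + 3) := by
  unfold fG nC
  refine Finset.sum_bij'
    (fun (A : Finset (Fin (m + 3))) _ => A.image Fin.val)
    (fun B hB => B.attachFin (fun x hx =>
      mem_range.1 ((mem_powerset.1 (mem_filter.1 hB).1) hx))) ?_ ?_ ?_ ?_ ?_
  · intro A hA
    simp only [mem_filter, mem_powerset] at hA ⊢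
    refine ⟨fun x hx => ?_, (indep_iff A).1 hA.2⟩
    obtain ⟨a, _, rfl⟩ := mem_image.1 hx
    exact mem_range.2 a.isLt
  · intro B hB
    simp only [mem_filter, mem_powerset] at hB ⊢
    refine ⟨subset_univ _, ?_⟩
    rw [indep_iff, _root_.image_val_attachFin]
    exact hB.2
  · intro A hA
    ext a
    rw [mem_attachFin]
    simp only [mem_image]
    constructor
    · rintro ⟨b, hb, hba⟩
      rwa [show b = a from Fin.val_injective hba] at hb
    · intro ha
      exact ⟨a, ha, rfl⟩
  · intro B hB
    exact image_val_attachFin B _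
  · intro A hA
    rw [Finset.card_image_of_injective _ Fin.val_injective]

/-- For every `k ≥ 1`, `f_{C_{3k}} ∈ {2, -2}`. -/
theorem fG_cycle_three_dvd (k : ℕ) (hk : 1 ≤ k) :
    fG (SimpleGraph.cycleGraph (3 * k)) = 2 ∨ fG (SimpleGraph.cycleGraph (3 * k)) = -2 := by
  obtain ⟨j, rfl⟩ : ∃ j, k = j + 1 := ⟨k - 1, by omega⟩
  have h3 : 3 * (j + 1) = 3 * j + 3 := by ring
  have := fG_cycle_eq (3 * j)
  rw [show (3 * j) + 3 = 3 * (j + 1) from by ring] at this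
  rw [this]
  rw [show 3 * (j + 1) = 3 * j + 3 from by ring, nC_eq, nP_three_mul_add_two, nP_three_mul]
  rcases Nat.even_or_odd j with he | ho
  · right; rw [he.neg_one_pow]; ring
  · left; rw [ho.neg_one_pow]; ring
end
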